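/- Let Φ(x,y) = 2/((1+y)² + |x|²) for (x,y) ∈ R^n × R. For every non-negative integer m and every smooth function u on (an open subset of) R^{n+1}, the identity Δ(Φ^{-m-1} Δ^m u) = Φ^{-m} Δ^{m+1}(Φ^{-1} u) holds, where Δ is the Euclidean Laplacian on R^{n+1} and Δ^m its m-th iterate. Equivalently, writing ρ(x,y) = (|x|² + (1+y)²)/2 = Φ^{-1}, one has Δ(ρ^{m+1} Δ^m u) = ρ^m Δ^{m+1}(ρ u). -/

import Mathlib

noncomputable section
open MeasureTheory Metric Real Filter

/-- `ℝ^m` as a Euclidean space. -/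
abbrev E (m : ℕ) := EuclideanSpace ℝ (Fin m)

/-- Second derivative of `f` at `p` in direction `v`. -/
def dir2 {m : ℕ} (f : E m → ℝ) (v p : E m) : ℝ :=
  fderiv ℝ (fun q => fderiv ℝ f q v) p v

/-- The Euclidean Laplacian on `ℝ^m`. -/
def lap {m : ℕ} (f : E m → ℝ) (p : E m) : ℝ :=
  ∑ i : Fin m, dir2 f (EuclideanSpace.single i 1) p

/-- The `k`-th iterated Euclidean Laplacian. -/
def iterLap {m : ℕ} (k : ℕ) (f : E m → ℝ) : E m → ℝ := lap^[k] f

/-- The surface measure `dω` on the unit sphere `S^n ⊆ ℝ^{n+1}`. -/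
def μS (n : ℕ) : Measure (sphere (0 : E (n+1)) 1) :=
  (volume : Measure (E (n+1))).toSphere

/-- `ω_n = 2 π^{(n+1)/2} / Γ((n+1)/2)`, the volume of the unit sphere `S^n`. -/
def ωvol (n : ℕ) : ℝ := 2 * π ^ (((n : ℝ) + 1) / 2) / Gamma (((n : ℝ) + 1) / 2)

/-- The `k`-th outward normal (radial) derivative at a point `ω` of the unit sphere. -/
def nderiv {m : ℕ} (k : ℕ) (v : E m → ℝ) (ω : E m) : ℝ :=
  iteratedDeriv k (fun t : ℝ => v (t • ω)) 1

/-- The Laplace–Beltrami operator `Δ̃` on the unit sphere `S^n`, computed as the Euclidean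
Laplacian of the degree-zero homogeneous extension. -/
def slap {n : ℕ} (f : E (n+1) → ℝ) (ω : E (n+1)) : ℝ :=
  lap (fun x => f (‖x‖⁻¹ • x)) ω

/-- The spherical (tangential) gradient `∇̃` on the unit sphere. -/
def sgrad {m : ℕ} (f : E m → ℝ) (ω : E m) : E m :=
  gradient f ω - (inner ℝ (gradient f ω) ω : ℝ) • ω

/-- The point `(x, y) ∈ ℝ^n × ℝ`, viewed in `ℝ^{n+1}`. -/
def emb {n : ℕ} (x : E n) (y : ℝ) : E (n+1) :=
  (EuclideanSpace.equiv (Fin (n+1)) ℝ).symm (Fin.snoc (EuclideanSpace.equiv (Fin n) ℝ x) y)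

/-- The upper half space `ℝ^{n+1}_+`. -/
def halfSpace (n : ℕ) : Set (E (n+1)) := {p | 0 < p (Fin.last n)}

/-- `∂_y^k U (x, 0)`, the `k`-th normal derivative on the boundary of the half space. -/
def yder {n : ℕ} (k : ℕ) (U : E (n+1) → ℝ) (x : E n) : ℝ :=
  iteratedDeriv k (fun y => U (emb x y)) 0

/-- `Δ_x U (x, 0)`, the Laplacian in the `x`-variables only, on the boundary. -/
def lapx {n : ℕ} (U : E (n+1) → ℝ) (x : E n) : ℝ :=
  lap (fun x' : E n => U (emb x' 0)) x

/-- Membership in the Sobolev space `W^{k,2}` of (the closure of) the upper half space: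
the function together with its derivatives up to order `k` is square-integrable there. -/
def inW (n k : ℕ) (U : E (n+1) → ℝ) : Prop :=
  ∀ j ≤ k, MemLp (fun p => ‖iteratedFDeriv ℝ j U p‖) 2 (volume.restrict (halfSpace n))

/-- The unit vector in the last coordinate direction. -/
def eLast (n : ℕ) : E (n+1) := EuclideanSpace.single (Fin.last n) 1

/-- `Φ(x,y) = 2 / ((1+y)² + |x|²)`. -/
def Phi (n : ℕ) (p : E (n+1)) : ℝ := 2 / ‖p + eLast n‖ ^ 2

/-- `ρ(x,y) = ((1+y)² + |x|²) / 2 = Φ(x,y)⁻¹`. -/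
def rhoFn (n : ℕ) (p : E (n+1)) : ℝ := ‖p + eLast n‖ ^ 2 / 2

/-- The conformal map `B : ℝ^{n+1}_+ → B^{n+1}`,
`B(x,y) = (2x/((1+y)²+|x|²), (|x|²+y²-1)/((1+y)²+|x|²))`. -/
def Bconf (n : ℕ) (p : E (n+1)) : E (n+1) :=
  eLast n + Phi n p • (p - (2 * p (Fin.last n) + 1) • eLast n)

namespace LapAux

variable {n : ℕ} {Ω : Set (E (n+1))}

/-- directional derivative -/
def dd (v : E (n+1)) (f : E (n+1) → ℝ) : E (n+1) → ℝ := fun q => fderiv ℝ f q v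

/-- derivative along the radial-type field `q + e` -/
def DD (n : ℕ) (f : E (n+1) → ℝ) : E (n+1) → ℝ := fun q => fderiv ℝ f q (q + eLast n)

/-- smooth on Ω -/
def Sm (Ω : Set (E (n+1))) (f : E (n+1) → ℝ) : Prop := ∀ p ∈ Ω, ContDiffAt ℝ (⊤ : ℕ∞) f p

lemma Sm.dd (hf : Sm Ω f) (v : E (n+1)) : Sm Ω (dd v f) := fun p hp =>
  ((hf p hp).fderiv_right (by simp)).clm_apply contDiffAt_const

lemma Sm.DD (hf : Sm Ω f) : Sm Ω (LapAux.DD n f) := fun p hp =>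
  ((hf p hp).fderiv_right (by simp)).clm_apply (contDiffAt_id.add contDiffAt_const)

lemma lap_eq (f : E (n+1) → ℝ) (p : E (n+1)) :
    lap f p = ∑ i : Fin (n+1), dd (EuclideanSpace.single i 1) (dd (EuclideanSpace.single i 1) f) p := rfl

lemma Sm.lap (hf : Sm Ω f) : Sm Ω (_root_.lap f) := by
  intro p hp
  exact ContDiffAt.sum (fun i _ => ((hf.dd (EuclideanSpace.single i 1)).dd (EuclideanSpace.single i 1)) p hp)

lemma Sm.mul (hf : Sm Ω f) (hg : Sm Ω g) : Sm Ω (fun q => f q * g q) := fun p hp =>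
  (hf p hp).mul (hg p hp)

lemma Sm.add (hf : Sm Ω f) (hg : Sm Ω g) : Sm Ω (fun q => f q + g q) := fun p hp =>
  (hf p hp).add (hg p hp)

lemma Sm.const_mul (hf : Sm Ω f) (c : ℝ) : Sm Ω (fun q => c * f q) := fun p hp =>
  contDiffAt_const.mul (hf p hp)

lemma Sm.of_contDiff (hf : ContDiff ℝ (⊤ : ℕ∞) f) : Sm Ω f := fun p _ => hf.contDiffAt

lemma rho_contDiff : ContDiff ℝ (⊤ : ℕ∞) (rhoFn n) := by
  have : ContDiff ℝ (⊤ : ℕ∞) (fun q : E (n+1) => ‖q + eLast n‖ ^ 2) :=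
    (contDiff_norm_sq ℝ).comp (contDiff_id.add contDiff_const)
  exact this.div_const 2

lemma Sm.rho : Sm Ω (rhoFn n) := Sm.of_contDiff rho_contDiff


lemma dd_congr (hΩ : IsOpen Ω) (h : ∀ q ∈ Ω, f q = g q) : ∀ p ∈ Ω, dd v f p = dd v g p := by
  intro p hp
  have h' : f =ᶠ[nhds p] g := Filter.eventuallyEq_of_mem (hΩ.mem_nhds hp) h
  simp only [dd, h'.fderiv_eq]

lemma lap_congr (hΩ : IsOpen Ω) (h : ∀ q ∈ Ω, f q = g q) : ∀ p ∈ Ω, _root_.lap f p = _root_.lap g p := by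
  intro p hp
  rw [lap_eq, lap_eq]
  refine Finset.sum_congr rfl fun i _ => ?_
  exact dd_congr hΩ (dd_congr hΩ h) p hp

lemma sm_diff (hf : Sm Ω f) (hp : p ∈ Ω) : DifferentiableAt ℝ f p :=
  (hf p hp).differentiableAt (by simp)

lemma dd_add (hf : Sm Ω f) (hg : Sm Ω g) (hp : p ∈ Ω) :
    dd v (fun q => f q + g q) p = dd v f p + dd v g p := by
  simp only [dd, fderiv_fun_add (sm_diff hf hp) (sm_diff hg hp)]; rfl

lemma dd_const_mul (hf : Sm Ω f) (hp : p ∈ Ω) (c : ℝ) :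
    dd v (fun q => c * f q) p = c * dd v f p := by
  simp only [dd, fderiv_const_mul (sm_diff hf hp) c]; rfl

lemma dd_mul (hf : Sm Ω f) (hg : Sm Ω g) (hp : p ∈ Ω) :
    dd v (fun q => f q * g q) p = f p * dd v g p + g p * dd v f p := by
  simp only [dd, fderiv_fun_mul (sm_diff hf hp) (sm_diff hg hp)]
  simp [mul_comm]

lemma DD_mul (hf : Sm Ω f) (hg : Sm Ω g) (hp : p ∈ Ω) :
    DD n (fun q => f q * g q) p = f p * DD n g p + g p * DD n f p := by
  simp only [DD, fderiv_fun_mul (sm_diff hf hp) (sm_diff hg hp)]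
  simp [mul_comm]

lemma lap_add (hΩ : IsOpen Ω) (hf : Sm Ω f) (hg : Sm Ω g) (hp : p ∈ Ω) :
    _root_.lap (fun q => f q + g q) p = _root_.lap f p + _root_.lap g p := by
  rw [lap_eq, lap_eq, lap_eq, ← Finset.sum_add_distrib]
  refine Finset.sum_congr rfl fun i _ => ?_
  set v := (EuclideanSpace.single i (1:ℝ) : E (n+1))
  have h1 : ∀ q ∈ Ω, dd v (fun q => f q + g q) q = dd v f q + dd v g q :=
    fun q hq => dd_add hf hg hq
  rw [dd_congr hΩ h1 p hp, dd_add (hf.dd v) (hg.dd v) hp]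

lemma lap_const_mul (hΩ : IsOpen Ω) (hf : Sm Ω f) (hp : p ∈ Ω) (c : ℝ) :
    _root_.lap (fun q => c * f q) p = c * _root_.lap f p := by
  rw [lap_eq, lap_eq, Finset.mul_sum]
  refine Finset.sum_congr rfl fun i _ => ?_
  set v := (EuclideanSpace.single i (1:ℝ) : E (n+1))
  have h1 : ∀ q ∈ Ω, dd v (fun q => c * f q) q = c * dd v f q :=
    fun q hq => dd_const_mul hf hq c
  rw [dd_congr hΩ h1 p hp, dd_const_mul (hf.dd v) hp c]


lemma fderiv_translate (e : E (n+1)) (p : E (n+1)) :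
    fderiv ℝ (fun q : E (n+1) => q + e) p = ContinuousLinearMap.id ℝ (E (n+1)) := by
  rw [show (fun q : E (n+1) => q + e) = fun q => id q + e from rfl, fderiv_add_const, fderiv_id]

lemma rho_eq (q : E (n+1)) : rhoFn n q = (inner ℝ (q + eLast n) (q + eLast n) : ℝ) / 2 := by
  rw [rhoFn, real_inner_self_eq_norm_sq]

lemma dd_rho (v p : E (n+1)) : dd v (rhoFn n) p = (inner ℝ (p + eLast n) v : ℝ) := by
  have hrho : rhoFn n = fun q : E (n+1) =>
      (inner ℝ (q + eLast n) (q + eLast n) : ℝ) * (1/2) := by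
    funext q; rw [rho_eq]; ring
  have hdiff : DifferentiableAt ℝ (fun q : E (n+1) => q + eLast n) p :=
    (differentiable_id.add_const _) p
  rw [dd, hrho, fderiv_mul_const (hdiff.inner ℝ hdiff)]
  simp only [ContinuousLinearMap.coe_smul', Pi.smul_apply, smul_eq_mul]
  rw [fderiv_inner_apply ℝ hdiff hdiff v, fderiv_translate]
  simp only [ContinuousLinearMap.coe_id', id_eq]
  rw [real_inner_comm v (p + eLast n)]
  ring

lemma dd_dd_rho (w v p : E (n+1)) : dd w (dd v (rhoFn n)) p = (inner ℝ w v : ℝ) := by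
  have h : dd v (rhoFn n) = fun q : E (n+1) => (innerSL ℝ v) q + (innerSL ℝ v) (eLast n) := by
    funext q
    rw [dd_rho, real_inner_comm, inner_add_right]
    simp [innerSL_apply_apply]
  rw [dd, h, fderiv_add_const, ContinuousLinearMap.fderiv]
  simp only [innerSL_apply_apply]
  exact real_inner_comm w v

lemma decomp (x : E (n+1)) :
    ∑ i : Fin (n+1), x i • (EuclideanSpace.single i (1:ℝ) : E (n+1)) = x := by
  have := (EuclideanSpace.basisFun (Fin (n+1)) ℝ).sum_repr x
  simpa [EuclideanSpace.basisFun_repr, EuclideanSpace.basisFun_apply] using this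

lemma sum_dd_single (f : E (n+1) → ℝ) (p : E (n+1)) :
    ∑ i : Fin (n+1), (p + eLast n) i * dd (EuclideanSpace.single i 1) f p = DD n f p := by
  rw [DD]
  conv_rhs => rw [← decomp (p + eLast n)]
  rw [map_sum (fderiv ℝ f p)]
  refine (Finset.sum_congr rfl fun i _ => ?_).symm
  rw [(fderiv ℝ f p).map_smul]
  rw [smul_eq_mul]
  rfl

lemma dd_clm (hf : Sm Ω f) (hq : q ∈ Ω) (a b : E (n+1)) :
    dd b (dd a f) q = fderiv ℝ (fderiv ℝ f) q b a := by
  have hc : DifferentiableAt ℝ (fderiv ℝ f) q :=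
    ((hf q hq).fderiv_right (m := (⊤ : ℕ∞)) (by simp)).differentiableAt (by simp)
  rw [show dd b (dd a f) q = fderiv ℝ (fun r => (fderiv ℝ f r) a) q b from rfl]
  rw [fderiv_clm_apply hc (differentiableAt_const a)]
  simp

lemma dd_swap (hf : Sm Ω f) (hq : q ∈ Ω) (a b : E (n+1)) :
    dd a (dd b f) q = dd b (dd a f) q := by
  rw [dd_clm hf hq, dd_clm hf hq]
  exact ((hf q hq).isSymmSndFDerivAt (by rw [minSmoothness_of_isRCLikeNormedField]; exact le_trans (b := ((2:ℕ∞) : WithTop ℕ∞)) (by norm_cast) (WithTop.coe_le_coe.mpr le_top))) a b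

lemma dd3_clm (hΩ : IsOpen Ω) (hf : Sm Ω f) (hp : p ∈ Ω) (a b c : E (n+1)) :
    dd a (dd b (dd c f)) p = fderiv ℝ (fderiv ℝ (fderiv ℝ f)) p a b c := by
  have h1 : ∀ q ∈ Ω, dd b (dd c f) q = (fun q => fderiv ℝ (fderiv ℝ f) q b c) q :=
    fun q hq => dd_clm hf hq c b
  have e1 : dd a (dd b (dd c f)) p = dd a (fun q => fderiv ℝ (fderiv ℝ f) q b c) p :=
    dd_congr hΩ h1 p hp
  rw [e1]
  have hd3 : DifferentiableAt ℝ (fderiv ℝ (fderiv ℝ f)) p :=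
    (((hf p hp).fderiv_right (m := ((⊤ : ℕ∞) : WithTop ℕ∞)) (by exact_mod_cast le_top)).fderiv_right (m := (⊤ : ℕ∞)) (by exact_mod_cast le_top)).differentiableAt (by simp)
  have hd2b : DifferentiableAt ℝ (fun q => fderiv ℝ (fderiv ℝ f) q b) p :=
    hd3.clm_apply (differentiableAt_const b)
  rw [show dd a (fun q => fderiv ℝ (fderiv ℝ f) q b c) p
      = fderiv ℝ (fun q => (fun q => fderiv ℝ (fderiv ℝ f) q b) q c) p a from rfl]
  rw [fderiv_clm_apply hd2b (differentiableAt_const c)]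
  rw [fderiv_clm_apply hd3 (differentiableAt_const b)]
  simp

lemma f3_symm (hΩ : IsOpen Ω) (hw : Sm Ω w) (hp : p ∈ Ω) (v c : E (n+1)) :
    fderiv ℝ (fderiv ℝ (fderiv ℝ w)) p v v c = fderiv ℝ (fderiv ℝ (fderiv ℝ w)) p c v v := by
  rw [← dd3_clm hΩ hw hp v v c, ← dd3_clm hΩ hw hp c v v]
  have swap23 : ∀ q ∈ Ω, dd v (dd c w) q = dd c (dd v w) q := fun q hq => dd_swap hw hq v c
  calc dd v (dd v (dd c w)) p
      = dd v (dd c (dd v w)) p := dd_congr hΩ swap23 p hp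
    _ = dd c (dd v (dd v w)) p := dd_swap ((hw.dd v).dd v |> fun _ => (hw.dd v)) hp v c

lemma dd_DD (hw : Sm Ω w) (v : E (n+1)) :
    ∀ q ∈ Ω, dd v (DD n w) q = dd v w q + (fderiv ℝ (fderiv ℝ w) q v) (q + eLast n) := by
  intro q hq
  have hc : DifferentiableAt ℝ (fderiv ℝ w) q :=
    ((hw q hq).fderiv_right (m := (⊤ : ℕ∞)) (by simp)).differentiableAt (by simp)
  have hu : DifferentiableAt ℝ (fun r : E (n+1) => r + eLast n) q :=
    (differentiable_id.add_const _) q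
  rw [show dd v (DD n w) q = fderiv ℝ (fun r => (fderiv ℝ w r) (r + eLast n)) q v from rfl]
  rw [fderiv_clm_apply hc hu, fderiv_translate]
  simp [dd]

lemma Sm_g (hw : Sm Ω w) (v : E (n+1)) :
    Sm Ω (fun q => (fderiv ℝ (fderiv ℝ w) q v) (q + eLast n)) := by
  intro q hq
  exact ((((hw q hq).fderiv_right (m := ((⊤ : ℕ∞) : WithTop ℕ∞)) (by exact_mod_cast le_top)).fderiv_right (m := (⊤ : ℕ∞)) (by exact_mod_cast le_top)).clm_apply
    contDiffAt_const).clm_apply (contDiffAt_id.add contDiffAt_const)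

lemma dd_g (hΩ : IsOpen Ω) (hw : Sm Ω w) (hp : p ∈ Ω) (v : E (n+1)) :
    dd v (fun q => (fderiv ℝ (fderiv ℝ w) q v) (q + eLast n)) p
      = fderiv ℝ (fderiv ℝ (fderiv ℝ w)) p v v (p + eLast n) + dd v (dd v w) p := by
  have hd3 : DifferentiableAt ℝ (fderiv ℝ (fderiv ℝ w)) p :=
    (((hw p hp).fderiv_right (m := ((⊤ : ℕ∞) : WithTop ℕ∞)) (by exact_mod_cast le_top)).fderiv_right (m := (⊤ : ℕ∞)) (by exact_mod_cast le_top)).differentiableAt (by simp)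
  have hcv : DifferentiableAt ℝ (fun q => fderiv ℝ (fderiv ℝ w) q v) p :=
    hd3.clm_apply (differentiableAt_const v)
  have hu : DifferentiableAt ℝ (fun r : E (n+1) => r + eLast n) p :=
    (differentiable_id.add_const _) p
  rw [show dd v (fun q => (fderiv ℝ (fderiv ℝ w) q v) (q + eLast n)) p
      = fderiv ℝ (fun q => (fun q => fderiv ℝ (fderiv ℝ w) q v) q (q + eLast n)) p v from rfl]
  rw [fderiv_clm_apply hcv hu, fderiv_translate]
  rw [fderiv_clm_apply hd3 (differentiableAt_const v)]
  rw [dd_clm hw hp v v]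
  simp [add_comm]

lemma lap_DD (hΩ : IsOpen Ω) (hw : Sm Ω w) (hp : p ∈ Ω) :
    _root_.lap (DD n w) p = DD n (_root_.lap w) p + 2 * _root_.lap w p := by
  have lapw_eq : _root_.lap w = fun q => ∑ i : Fin (n+1),
      dd (EuclideanSpace.single i 1) (dd (EuclideanSpace.single i 1) w) q := rfl
  -- RHS first part
  have hDDlap : DD n (_root_.lap w) p = ∑ i : Fin (n+1),
      fderiv ℝ (fderiv ℝ (fderiv ℝ w)) p (p + eLast n)
        (EuclideanSpace.single i 1) (EuclideanSpace.single i 1) := by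
    rw [DD, lapw_eq, fderiv_fun_sum (fun i _ => sm_diff ((hw.dd _).dd _) hp)]
    rw [ContinuousLinearMap.sum_apply]
    exact Finset.sum_congr rfl fun i _ =>
      dd3_clm hΩ hw hp (p + eLast n) (EuclideanSpace.single i 1) (EuclideanSpace.single i 1)
  rw [hDDlap, lap_eq, lap_eq, Finset.mul_sum, ← Finset.sum_add_distrib]
  refine Finset.sum_congr rfl fun i _ => ?_
  set v := (EuclideanSpace.single i (1:ℝ) : E (n+1)) with hv
  have step1 : dd v (dd v (DD n w)) p
      = dd v (fun q => dd v w q + (fderiv ℝ (fderiv ℝ w) q v) (q + eLast n)) p :=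
    dd_congr hΩ (dd_DD hw v) p hp
  rw [step1, dd_add (hw.dd v) (Sm_g hw v) hp, dd_g hΩ hw hp v]
  have : fderiv ℝ (fderiv ℝ (fderiv ℝ w)) p v v (p + eLast n)
      = fderiv ℝ (fderiv ℝ (fderiv ℝ w)) p (p + eLast n) v v := f3_symm hΩ hw hp v (p + eLast n)
  rw [this]
  ring

lemma single_coord (x : E (n+1)) (i : Fin (n+1)) :
    (inner ℝ x (EuclideanSpace.single i (1:ℝ)) : ℝ) = x i := by
  rw [EuclideanSpace.inner_single_right]; simp

lemma DD_rho (p : E (n+1)) : DD n (rhoFn n) p = 2 * rhoFn n p := by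
  have : DD n (rhoFn n) p = dd (p + eLast n) (rhoFn n) p := rfl
  rw [this, dd_rho, real_inner_self_eq_norm_sq, rhoFn]
  ring

lemma lap_rho_mul (hΩ : IsOpen Ω) (hw : Sm Ω w) (hp : p ∈ Ω) :
    _root_.lap (fun q => rhoFn n q * w q) p
      = rhoFn n p * _root_.lap w p + 2 * DD n w p + ((n:ℝ)+1) * w p := by
  have key : ∀ i : Fin (n+1),
      dd (EuclideanSpace.single i 1) (dd (EuclideanSpace.single i 1) (fun q => rhoFn n q * w q)) p
        = rhoFn n p * dd (EuclideanSpace.single i 1) (dd (EuclideanSpace.single i 1) w) p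
          + 2 * ((p + eLast n) i * dd (EuclideanSpace.single i 1) w p) + w p := by
    intro i
    set v := (EuclideanSpace.single i (1:ℝ) : E (n+1)) with hv
    have h1 : ∀ q ∈ Ω, dd v (fun q => rhoFn n q * w q) q
        = (fun q => rhoFn n q * dd v w q + w q * dd v (rhoFn n) q) q :=
      fun q hq => dd_mul Sm.rho hw hq
    rw [dd_congr hΩ h1 p hp]
    rw [dd_add (Sm.rho.mul (hw.dd v)) (hw.mul (Sm.rho.dd v)) hp]
    rw [dd_mul Sm.rho (hw.dd v) hp, dd_mul hw (Sm.rho.dd v) hp]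
    rw [dd_dd_rho, dd_rho]
    rw [single_coord, real_inner_self_eq_norm_sq, hv, EuclideanSpace.norm_single, norm_one]
    push_cast
    ring
  rw [lap_eq, lap_eq]
  have : ∑ i : Fin (n+1),
      dd (EuclideanSpace.single i 1) (dd (EuclideanSpace.single i 1) (fun q => rhoFn n q * w q)) p
      = ∑ i : Fin (n+1),
        (rhoFn n p * dd (EuclideanSpace.single i 1) (dd (EuclideanSpace.single i 1) w) p
          + 2 * ((p + eLast n) i * dd (EuclideanSpace.single i 1) w p) + w p) :=
    Finset.sum_congr rfl fun i _ => key i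
  rw [this]
  rw [Finset.sum_add_distrib, Finset.sum_add_distrib, ← Finset.mul_sum, ← Finset.mul_sum]
  rw [sum_dd_single w p, Finset.sum_const]
  simp only [Finset.card_univ, Fintype.card_fin, nsmul_eq_mul]
  push_cast
  ring

lemma lap_rho_pow_mul (hΩ : IsOpen Ω) :
    ∀ (k : ℕ) (w : E (n+1) → ℝ), Sm Ω w → ∀ p ∈ Ω,
    _root_.lap (fun q => rhoFn n q ^ (k+1) * w q) p
      = rhoFn n p ^ (k+1) * _root_.lap w p
        + 2*((k:ℝ)+1) * (rhoFn n p ^ k * DD n w p)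
        + ((k:ℝ)+1) * ((n:ℝ)+1+2*(k:ℝ)) * (rhoFn n p ^ k * w p) := by
  intro k
  induction k with
  | zero =>
    intro w hw p hp
    have h : (fun q => rhoFn n q ^ (0+1) * w q) = fun q => rhoFn n q * w q := by
      funext q; ring
    rw [h, lap_rho_mul hΩ hw hp]
    push_cast
    ring
  | succ k ih =>
    intro w hw p hp
    have h : (fun q => rhoFn n q ^ (k+1+1) * w q)
        = fun q => rhoFn n q ^ (k+1) * (rhoFn n q * w q) := by
      funext q; ring
    rw [h, ih (fun q => rhoFn n q * w q) (Sm.rho.mul hw) p hp]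
    rw [lap_rho_mul hΩ hw hp]
    rw [DD_mul Sm.rho hw hp, DD_rho]
    push_cast
    ring

lemma Sm_iterLap (hu : Sm Ω u) : ∀ k : ℕ, Sm Ω (iterLap k u)
  | 0 => hu
  | (k+1) => by
    have h : iterLap (k+1) u = _root_.lap (iterLap k u) := Function.iterate_succ_apply' _ k u
    rw [h]
    exact (Sm_iterLap hu k).lap

lemma iterLap_succ (k : ℕ) (f : E (n+1) → ℝ) :
    iterLap (k+1) f = _root_.lap (iterLap k f) := Function.iterate_succ_apply' _ k f

lemma iterLap_rho_mul (hΩ : IsOpen Ω) (hu : Sm Ω u) :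
    ∀ (k : ℕ), ∀ p ∈ Ω,
    iterLap (k+1) (fun q => rhoFn n q * u q) p
      = rhoFn n p * iterLap (k+1) u p
        + 2*((k:ℝ)+1) * DD n (iterLap k u) p
        + ((k:ℝ)+1) * ((n:ℝ)+1+2*(k:ℝ)) * iterLap k u p := by
  intro k
  induction k with
  | zero =>
    intro p hp
    have e1 : iterLap (0+1) (fun q => rhoFn n q * u q) p
        = _root_.lap (fun q => rhoFn n q * u q) p := by rw [iterLap_succ 0]; rfl
    have e2 : iterLap (0+1) u p = _root_.lap u p := by rw [iterLap_succ 0]; rfl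
    have e3 : iterLap 0 u = u := rfl
    rw [e1, e2, e3, lap_rho_mul hΩ hu hp]
    push_cast
    ring
  | succ k ih =>
    intro p hp
    rw [iterLap_succ (k+1)]
    have hsm1 : Sm Ω (fun q => rhoFn n q * iterLap (k+1) u q) :=
      Sm.rho.mul (Sm_iterLap hu (k+1))
    have hsm2 : Sm Ω (fun q => (2*((k:ℝ)+1)) * DD n (iterLap k u) q) :=
      ((Sm_iterLap hu k).DD).const_mul _
    have hsm3 : Sm Ω (fun q => (((k:ℝ)+1) * ((n:ℝ)+1+2*(k:ℝ))) * iterLap k u q) :=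
      (Sm_iterLap hu k).const_mul _
    have hcong : ∀ q ∈ Ω, iterLap (k+1) (fun q => rhoFn n q * u q) q
        = (fun q => rhoFn n q * iterLap (k+1) u q
            + ((2*((k:ℝ)+1)) * DD n (iterLap k u) q
              + (((k:ℝ)+1) * ((n:ℝ)+1+2*(k:ℝ))) * iterLap k u q)) q := by
      intro q hq
      rw [ih q hq]; ring
    rw [lap_congr hΩ hcong p hp]
    rw [lap_add hΩ hsm1 (hsm2.add hsm3) hp]
    rw [lap_add hΩ hsm2 hsm3 hp]
    rw [lap_const_mul hΩ ((Sm_iterLap hu k).DD) hp, lap_const_mul hΩ (Sm_iterLap hu k) hp]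
    rw [lap_rho_mul hΩ (Sm_iterLap hu (k+1)) hp]
    rw [lap_DD hΩ (Sm_iterLap hu k) hp]
    rw [← iterLap_succ k, ← iterLap_succ (k+1)]
    push_cast
    ring

end LapAux

namespace LapAux

variable {n : ℕ}

lemma phi_inv (q : E (n+1)) : (Phi n q)⁻¹ = rhoFn n q := by
  rw [Phi, rhoFn, inv_div]

lemma phi_zpow (q : E (n+1)) (k : ℕ) : Phi n q ^ (-(k:ℤ)) = rhoFn n q ^ k := by
  rw [zpow_neg, zpow_natCast, ← inv_pow, phi_inv]

end LapAux

/-- **Conjugation identity for iterated Laplacians**: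
`Δ(Φ^{-m-1} Δ^m u) = Φ^{-m} Δ^{m+1}(Φ^{-1} u)`, equivalently with `ρ = Φ⁻¹`,
`Δ(ρ^{m+1} Δ^m u) = ρ^m Δ^{m+1}(ρ u)`. -/
theorem laplacian_conjugation_identity (n m : ℕ) (Ω : Set (E (n+1))) (hΩ : IsOpen Ω)
    (u : E (n+1) → ℝ) (hu : ContDiffOn ℝ (⊤ : ℕ∞) u Ω) :
    ∀ p ∈ Ω,
      (lap (fun q => Phi n q ^ (-(m : ℤ) - 1) * iterLap m u q) p =
        Phi n p ^ (-(m : ℤ)) * iterLap (m + 1) (fun q => (Phi n q)⁻¹ * u q) p) ∧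
      (lap (fun q => rhoFn n q ^ (m + 1) * iterLap m u q) p =
        rhoFn n p ^ m * iterLap (m + 1) (fun q => rhoFn n q * u q) p) := by
  intro p hp
  have hu' : LapAux.Sm Ω u := fun q hq => hu.contDiffAt (hΩ.mem_nhds hq)
  have main : lap (fun q => rhoFn n q ^ (m+1) * iterLap m u q) p
      = rhoFn n p ^ m * iterLap (m+1) (fun q => rhoFn n q * u q) p := by
    rw [LapAux.lap_rho_pow_mul hΩ m (iterLap m u) (LapAux.Sm_iterLap hu' m) p hp]
    rw [LapAux.iterLap_rho_mul hΩ hu' m p hp]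
    rw [← LapAux.iterLap_succ m u]
    ring
  refine ⟨?_, main⟩
  have hfun1 : (fun q => Phi n q ^ (-(m:ℤ) - 1) * iterLap m u q)
      = (fun q => rhoFn n q ^ (m+1) * iterLap m u q) := by
    funext q
    rw [show (-(m:ℤ) - 1) = (-(((m+1) : ℕ) : ℤ)) from by push_cast; ring]
    rw [LapAux.phi_zpow q (m+1)]
  have hfun2 : (fun q => (Phi n q)⁻¹ * u q) = (fun q => rhoFn n q * u q) := by
    funext q; rw [LapAux.phi_inv]
  rw [hfun1, hfun2, show Phi n p ^ (-(m:ℤ)) = rhoFn n p ^ m from LapAux.phi_zpow p m]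
  exact main
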